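/- arXiv:1911.05074 — 2 statements merged into one kernel-verified Lean document; each statement's English description precedes it below -/
import Mathlib

section
/- Let F:[0,1]²→[0,1] be a continuous operation that is nondecreasing in each variable, and let f be a convex fuzzy truth value. Then for all fuzzy truth values g and h, f ⊙_F (g ⊓ h) = (f ⊙_F g) ⊓ (f ⊙_F h). -/
open Set

/-- The extension of a binary operation `G` on `[0,1]` to fuzzy truth values:
`(f ⊙_G g)(z) = sup { min (f x) (g y) | x, y ∈ [0,1], G x y = z }` (with `sSup ∅ = 0` in `ℝ`). -/
noncomputable def extOp (G : ℝ → ℝ → ℝ) (f g : ℝ → ℝ) : ℝ → ℝ := fun z =>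
  sSup {r : ℝ | ∃ x ∈ Icc (0:ℝ) 1, ∃ y ∈ Icc (0:ℝ) 1, G x y = z ∧ r = min (f x) (g y)}

/-- A fuzzy truth value: a map of `[0,1]` into itself. -/
def IsFTV (f : ℝ → ℝ) : Prop := ∀ x ∈ Icc (0:ℝ) 1, f x ∈ Icc (0:ℝ) 1

/-- Convexity of a fuzzy truth value. -/
def ConvexFTV (f : ℝ → ℝ) : Prop :=
  ∀ x y z : ℝ, 0 ≤ x → x ≤ y → y ≤ z → z ≤ 1 → min (f x) (f z) ≤ f y

/-- `F` maps `[0,1]²` into `[0,1]`. -/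
def MapsI (F : ℝ → ℝ → ℝ) : Prop :=
  ∀ x ∈ Icc (0:ℝ) 1, ∀ y ∈ Icc (0:ℝ) 1, F x y ∈ Icc (0:ℝ) 1

/-- `F` is nondecreasing in each variable on `[0,1]²`. -/
def MonoI (F : ℝ → ℝ → ℝ) : Prop :=
  ∀ x₁ x₂ y₁ y₂ : ℝ, x₁ ∈ Icc (0:ℝ) 1 → x₂ ∈ Icc (0:ℝ) 1 → y₁ ∈ Icc (0:ℝ) 1 →
    y₂ ∈ Icc (0:ℝ) 1 → x₁ ≤ x₂ → y₁ ≤ y₂ → F x₁ y₁ ≤ F x₂ y₂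

/-- `F` is continuous on `[0,1]²`. -/
def ContI (F : ℝ → ℝ → ℝ) : Prop :=
  ContinuousOn (fun p : ℝ × ℝ => F p.1 p.2) (Icc (0:ℝ) 1 ×ˢ Icc (0:ℝ) 1)

/-- `F` is commutative on `[0,1]²`. -/
def CommI (F : ℝ → ℝ → ℝ) : Prop := ∀ x ∈ Icc (0:ℝ) 1, ∀ y ∈ Icc (0:ℝ) 1, F x y = F y x

/-- `F` is associative on `[0,1]`. -/
def AssocI (F : ℝ → ℝ → ℝ) : Prop :=
  ∀ x ∈ Icc (0:ℝ) 1, ∀ y ∈ Icc (0:ℝ) 1, ∀ z ∈ Icc (0:ℝ) 1, F (F x y) z = F x (F y z)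

lemma my_le_of_forall_lt_le {a b : ℝ} (h : ∀ c, c < a → c ≤ b) : a ≤ b := by
  by_contra hb
  push_neg at hb
  obtain ⟨c, hc1, hc2⟩ := exists_between hb
  exact absurd (h c hc2) (not_le.2 hc1)

lemma extOp_bddAbove (G : ℝ → ℝ → ℝ) (f g : ℝ → ℝ) (hf : IsFTV f) (z : ℝ) :
    BddAbove {r : ℝ | ∃ x ∈ Icc (0:ℝ) 1, ∃ y ∈ Icc (0:ℝ) 1, G x y = z ∧ r = min (f x) (g y)} := by
  refine ⟨1, ?_⟩
  rintro r ⟨x, hx, y, hy, -, rfl⟩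
  exact min_le_of_left_le (hf x hx).2

lemma le_extOp (G : ℝ → ℝ → ℝ) (f g : ℝ → ℝ) (hf : IsFTV f) {x y z : ℝ}
    (hx : x ∈ Icc (0:ℝ) 1) (hy : y ∈ Icc (0:ℝ) 1) (hxy : G x y = z) :
    min (f x) (g y) ≤ extOp G f g z :=
  le_csSup (extOp_bddAbove G f g hf z) ⟨x, hx, y, hy, hxy, rfl⟩

lemma extOp_nonneg (G : ℝ → ℝ → ℝ) (f g : ℝ → ℝ) (hf : IsFTV f) (hg : IsFTV g) (z : ℝ) :
    0 ≤ extOp G f g z := by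
  apply Real.sSup_nonneg
  rintro r ⟨x, hx, y, hy, -, rfl⟩
  exact le_min (hf x hx).1 (hg y hy).1

lemma extOp_le (G : ℝ → ℝ → ℝ) (f g : ℝ → ℝ) {z c : ℝ} (hc : 0 ≤ c)
    (h : ∀ x ∈ Icc (0:ℝ) 1, ∀ y ∈ Icc (0:ℝ) 1, G x y = z → min (f x) (g y) ≤ c) :
    extOp G f g z ≤ c := by
  apply Real.sSup_le _ hc
  rintro r ⟨x, hx, y, hy, hxy, rfl⟩
  exact h x hx y hy hxy

lemma extOp_isFTV (G : ℝ → ℝ → ℝ) (f g : ℝ → ℝ) (hf : IsFTV f) (hg : IsFTV g) :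
    IsFTV (extOp G f g) := fun z _ =>
  ⟨extOp_nonneg G f g hf hg z,
   extOp_le G f g zero_le_one (fun x hx y _ _ => min_le_of_left_le (hf x hx).2)⟩

lemma exists_gt_of_lt_extOp (G : ℝ → ℝ → ℝ) (f g : ℝ → ℝ) {z c : ℝ} (hc : 0 ≤ c)
    (h : c < extOp G f g z) :
    ∃ x ∈ Icc (0:ℝ) 1, ∃ y ∈ Icc (0:ℝ) 1, G x y = z ∧ c < min (f x) (g y) := by
  simp only [extOp] at h
  have hne : {r : ℝ | ∃ x ∈ Icc (0:ℝ) 1, ∃ y ∈ Icc (0:ℝ) 1, G x y = z ∧ r = min (f x) (g y)}.Nonempty := by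
    by_contra hemp
    rw [not_nonempty_iff_eq_empty] at hemp
    rw [hemp, Real.sSup_empty] at h
    linarith
  obtain ⟨r, hr, hcr⟩ := exists_lt_of_lt_csSup hne h
  obtain ⟨x, hx, y, hy, hxy, rfl⟩ := hr
  exact ⟨x, hx, y, hy, hxy, hcr⟩

lemma key_ivt (F : ℝ → ℝ → ℝ) (hFcont : ContI F) (f : ℝ → ℝ) (hfconvex : ConvexFTV f)
    {x x' v t : ℝ} (hx : x ∈ Icc (0:ℝ) 1) (hx' : x' ∈ Icc (0:ℝ) 1) (hv : v ∈ Icc (0:ℝ) 1)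
    (h1 : F x v ≤ t) (h2 : t ≤ F x' v) :
    ∃ x₀ ∈ Icc (0:ℝ) 1, F x₀ v = t ∧ min (f x) (f x') ≤ f x₀ := by
  have hsub : uIcc x x' ⊆ Icc (0:ℝ) 1 := by
    intro s hs
    rw [mem_uIcc] at hs
    rcases hs with ⟨h1', h2'⟩ | ⟨h1', h2'⟩
    · exact ⟨le_trans hx.1 h1', le_trans h2' hx'.2⟩
    · exact ⟨le_trans hx'.1 h1', le_trans h2' hx.2⟩
  have hcont : ContinuousOn (fun s => F s v) (uIcc x x') := by
    have hc2 : ContinuousOn (fun s : ℝ => ((s, v) : ℝ × ℝ)) (uIcc x x') :=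
      (continuous_id.prodMk continuous_const).continuousOn
    exact hFcont.comp hc2 (fun s hs => ⟨hsub hs, hv⟩)
  have himg := intermediate_value_uIcc hcont
  have ht : t ∈ uIcc ((fun s => F s v) x) ((fun s => F s v) x') :=
    mem_uIcc.2 (Or.inl ⟨h1, h2⟩)
  obtain ⟨x₀, hx₀, hFx₀⟩ := himg ht
  refine ⟨x₀, hsub hx₀, hFx₀, ?_⟩
  rcases le_total x x' with hxx | hxx
  · rw [uIcc_of_le hxx] at hx₀
    exact hfconvex x x₀ x' hx.1 hx₀.1 hx₀.2 hx'.2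
  · rw [uIcc_of_ge hxx] at hx₀
    rw [min_comm]
    exact hfconvex x' x₀ x hx'.1 hx₀.1 hx₀.2 hx.2

/-- Distributivity of an extended continuous nondecreasing operation over the
extended minimum `⊓`, for a convex first argument. -/
theorem extOp_distrib_inf (F : ℝ → ℝ → ℝ)
    (hFmap : MapsI F) (hFcont : ContI F) (hFmono : MonoI F)
    (f : ℝ → ℝ) (hf : IsFTV f) (hfconvex : ConvexFTV f)
    (g h : ℝ → ℝ) (hg : IsFTV g) (hh : IsFTV h) :
    ∀ z ∈ Icc (0:ℝ) 1,
      extOp F f (extOp min g h) z = extOp min (extOp F f g) (extOp F f h) z := by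
  intro z hz
  have hWftv : IsFTV (extOp min g h) := extOp_isFTV min g h hg hh
  have hAftv : IsFTV (extOp F f g) := extOp_isFTV F f g hf hg
  have hBftv : IsFTV (extOp F f h) := extOp_isFTV F f h hf hh
  have hRnn : 0 ≤ extOp min (extOp F f g) (extOp F f h) z :=
    extOp_nonneg min _ _ hAftv hBftv z
  have hLnn : 0 ≤ extOp F f (extOp min g h) z :=
    extOp_nonneg F f _ hf hWftv z
  apply le_antisymm
  · -- LHS ≤ RHS
    apply extOp_le F f (extOp min g h) hRnn
    intro x hx w hw hxw
    apply my_le_of_forall_lt_le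
    intro c hc
    rcases lt_or_ge c 0 with hc0 | hc0
    · exact hc0.le.trans hRnn
    have hcf : c < f x := lt_of_lt_of_le hc (min_le_left _ _)
    have hcW : c < extOp min g h w := lt_of_lt_of_le hc (min_le_right _ _)
    obtain ⟨u, hu, v, hv, huv, hcgh⟩ := exists_gt_of_lt_extOp min g h hc0 hcW
    have hcg : c < g u := lt_of_lt_of_le hcgh (min_le_left _ _)
    have hch : c < h v := lt_of_lt_of_le hcgh (min_le_right _ _)
    rcases le_total u v with huvle | huvle
    · -- w = u, take a = z, b = F x v
      have hwu : w = u := by rw [← huv, min_eq_left huvle]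
      have hFxu : F x u = z := by rw [← hwu]; exact hxw
      have hb : F x v ∈ Icc (0:ℝ) 1 := hFmap x hx v hv
      have hzb : z ≤ F x v := by
        rw [← hFxu]; exact hFmono x x u v hx hx hu hv le_rfl huvle
      have hA : min (f x) (g u) ≤ extOp F f g z := le_extOp F f g hf hx hu hFxu
      have hB : min (f x) (h v) ≤ extOp F f h (F x v) := le_extOp F f h hf hx hv rfl
      have hmem : min (extOp F f g z) (extOp F f h (F x v)) ≤
          extOp min (extOp F f g) (extOp F f h) z :=
        le_extOp min _ _ hAftv hz hb (min_eq_left hzb)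
      have : c < min (extOp F f g z) (extOp F f h (F x v)) :=
        lt_min (lt_of_lt_of_le (lt_min hcf hcg) hA) (lt_of_lt_of_le (lt_min hcf hch) hB)
      exact le_trans this.le hmem
    · -- w = v, take b = z, a = F x u
      have hwv : w = v := by rw [← huv, min_eq_right huvle]
      have hFxv : F x v = z := by rw [← hwv]; exact hxw
      have ha : F x u ∈ Icc (0:ℝ) 1 := hFmap x hx u hu
      have hza : z ≤ F x u := by
        rw [← hFxv]; exact hFmono x x v u hx hx hv hu le_rfl huvle
      have hA : min (f x) (g u) ≤ extOp F f g (F x u) := le_extOp F f g hf hx hu rfl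
      have hB : min (f x) (h v) ≤ extOp F f h z := le_extOp F f h hf hx hv hFxv
      have hmem : min (extOp F f g (F x u)) (extOp F f h z) ≤
          extOp min (extOp F f g) (extOp F f h) z :=
        le_extOp min _ _ hAftv ha hz (min_eq_right hza)
      have : c < min (extOp F f g (F x u)) (extOp F f h z) :=
        lt_min (lt_of_lt_of_le (lt_min hcf hcg) hA) (lt_of_lt_of_le (lt_min hcf hch) hB)
      exact le_trans this.le hmem
  · -- RHS ≤ LHS
    apply extOp_le min (extOp F f g) (extOp F f h) hLnn
    intro a ha b hb hab
    apply my_le_of_forall_lt_le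
    intro c hc
    rcases lt_or_ge c 0 with hc0 | hc0
    · exact hc0.le.trans hLnn
    have hcA : c < extOp F f g a := lt_of_lt_of_le hc (min_le_left _ _)
    have hcB : c < extOp F f h b := lt_of_lt_of_le hc (min_le_right _ _)
    obtain ⟨x, hx, u, hu, hFxu, hcfg⟩ := exists_gt_of_lt_extOp F f g hc0 hcA
    obtain ⟨x', hx', v, hv, hFx'v, hcfh⟩ := exists_gt_of_lt_extOp F f h hc0 hcB
    have hcfx : c < f x := lt_of_lt_of_le hcfg (min_le_left _ _)
    have hcg : c < g u := lt_of_lt_of_le hcfg (min_le_right _ _)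
    have hcfx' : c < f x' := lt_of_lt_of_le hcfh (min_le_left _ _)
    have hch : c < h v := lt_of_lt_of_le hcfh (min_le_right _ _)
    rcases le_total a b with habl | habl
    · have hza : z = a := by rw [← hab, min_eq_left habl]
      rcases le_total u v with huv | huv
      · -- use (x, u) with inner witness (u, v)
        have hWu : min (g u) (h v) ≤ extOp min g h u :=
          le_extOp min g h hg hu hv (min_eq_left huv)
        have hfin : min (f x) (extOp min g h u) ≤ extOp F f (extOp min g h) z :=
          le_extOp F f _ hf hx hu (by rw [hza]; exact hFxu)
        have : c < min (f x) (extOp min g h u) :=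
          lt_min hcfx (lt_of_lt_of_le (lt_min hcg hch) hWu)
        exact le_trans this.le hfin
      · -- v ≤ u : IVT between x and x' at second coordinate v, target a
        have h1 : F x v ≤ a := by
          rw [← hFxu]; exact hFmono x x v u hx hx hv hu le_rfl huv
        have h2 : a ≤ F x' v := by rw [hFx'v]; exact habl
        obtain ⟨x₀, hx₀, hFx₀, hfx₀⟩ := key_ivt F hFcont f hfconvex hx hx' hv h1 h2
        have hWv : min (g u) (h v) ≤ extOp min g h v :=
          le_extOp min g h hg hu hv (min_eq_right huv)
        have hfin : min (f x₀) (extOp min g h v) ≤ extOp F f (extOp min g h) z :=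
          le_extOp F f _ hf hx₀ hv (by rw [hza]; exact hFx₀)
        have : c < min (f x₀) (extOp min g h v) :=
          lt_min (lt_of_lt_of_le (lt_min hcfx hcfx') hfx₀)
            (lt_of_lt_of_le (lt_min hcg hch) hWv)
        exact le_trans this.le hfin
    · have hzb : z = b := by rw [← hab, min_eq_right habl]
      rcases le_total v u with hvu | hvu
      · -- use (x', v) with inner witness (u, v)
        have hWv : min (g u) (h v) ≤ extOp min g h v :=
          le_extOp min g h hg hu hv (min_eq_right hvu)
        have hfin : min (f x') (extOp min g h v) ≤ extOp F f (extOp min g h) z :=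
          le_extOp F f _ hf hx' hv (by rw [hzb]; exact hFx'v)
        have : c < min (f x') (extOp min g h v) :=
          lt_min hcfx' (lt_of_lt_of_le (lt_min hcg hch) hWv)
        exact le_trans this.le hfin
      · -- u ≤ v : IVT between x' and x at second coordinate u, target b
        have h1 : F x' u ≤ b := by
          rw [← hFx'v]; exact hFmono x' x' u v hx' hx' hu hv le_rfl hvu
        have h2 : b ≤ F x u := by rw [hFxu]; exact habl
        obtain ⟨x₀, hx₀, hFx₀, hfx₀⟩ := key_ivt F hFcont f hfconvex hx' hx hu h1 h2
        have hWu : min (g u) (h v) ≤ extOp min g h u :=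
          le_extOp min g h hg hu hv (min_eq_left hvu)
        have hfin : min (f x₀) (extOp min g h u) ≤ extOp F f (extOp min g h) z :=
          le_extOp F f _ hf hx₀ hu (by rw [hzb]; exact hFx₀)
        have : c < min (f x₀) (extOp min g h u) :=
          lt_min (lt_of_lt_of_le (lt_min hcfx' hcfx) hfx₀)
            (lt_of_lt_of_le (lt_min hcg hch) hWu)
        exact le_trans this.le hfin
end

section
/- Let a ∈ [0,1), let q, t ∈ [a,1], and let F, U : [0,1]²→[0,1] be nondecreasing in each variable such that F(x, U(q,t)) = U(F(x,q), F(x,t)) for all x ∈ [a,1] and the map x ↦ F(x, U(q,t)) is strictly increasing on [a,1]. If p, s, y' ∈ [a,1] satisfy U(F(y',q), F(y',t)) = U(F(p,q), F(s,t)), then min(p,s) ≤ y' ≤ max(p,s). Consequently, for every convex fuzzy truth value f, f(y') ∧ g(q) ∧ h(t) ≥ f(p) ∧ g(q) ∧ f(s) ∧ h(t) for all fuzzy truth values g, h (in particular f(y') ≥ min(f(p), f(s))). -/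
open Set

/-!
The map `x ↦ U (F x q) (F x t)` coincides on `[a,1]` with the strictly increasing
`x ↦ F x (U q t)`. By monotonicity of `F` and `U`, the value `U (F p q) (F s t)` — which equals
that map at `y'` — is squeezed between its values at `min p s` and `max p s`, and strict
monotonicity reflects these inequalities back to `min p s ≤ y' ≤ max p s`. Convexity of `f`
then gives `min (f p) (f s) ≤ f y'`.
-/

theorem monoI_comp_le {F U : ℝ → ℝ → ℝ} (hFmap : MapsI F) (hFmono : MonoI F)
    (hUmono : MonoI U) {q t x₁ x₂ y₁ y₂ : ℝ} (hq : q ∈ Icc (0:ℝ) 1) (ht : t ∈ Icc (0:ℝ) 1)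
    (hx₁ : x₁ ∈ Icc (0:ℝ) 1) (hx₂ : x₂ ∈ Icc (0:ℝ) 1) (hy₁ : y₁ ∈ Icc (0:ℝ) 1)
    (hy₂ : y₂ ∈ Icc (0:ℝ) 1) (hx : x₁ ≤ x₂) (hy : y₁ ≤ y₂) :
    U (F x₁ q) (F y₁ t) ≤ U (F x₂ q) (F y₂ t) :=
  hUmono _ _ _ _ (hFmap _ hx₁ _ hq) (hFmap _ hx₂ _ hq) (hFmap _ hy₁ _ ht) (hFmap _ hy₂ _ ht)
    (hFmono _ _ _ _ hx₁ hx₂ hq hq hx le_rfl) (hFmono _ _ _ _ hy₁ hy₂ ht ht hy le_rfl)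

theorem StrictMonoOn.mem_Icc_of_map_mem_Icc {α β : Type*} [LinearOrder α] [Preorder β]
    {S : Set α} {φ : α → β} (hφ : StrictMonoOn φ S) {m y M : α}
    (hm : m ∈ S) (hy : y ∈ S) (hM : M ∈ S) (h : φ y ∈ Icc (φ m) (φ M)) :
    y ∈ Icc m M :=
  ⟨(hφ.le_iff_le hm hy).1 h.1, (hφ.le_iff_le hy hM).1 h.2⟩

theorem ConvexFTV.min_le_of_mem_uIcc {f : ℝ → ℝ} (hf : ConvexFTV f) {p s y : ℝ}
    (hp : p ∈ Icc (0:ℝ) 1) (hs : s ∈ Icc (0:ℝ) 1) (hy : y ∈ uIcc p s) :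
    min (f p) (f s) ≤ f y := by
  rcases le_total p s with hps | hsp
  · rw [uIcc_of_le hps] at hy
    exact hf p y s hp.1 hy.1 hy.2 hs.2
  · rw [uIcc_of_ge hsp] at hy
    exact min_comm (f p) (f s) ▸ hf s y p hs.1 hy.1 hy.2 hp.2

theorem between_of_strictMono_distrib_general (a : ℝ) (ha : a ∈ Ico (0:ℝ) 1)
    (q t : ℝ) (hq : q ∈ Icc a 1) (ht : t ∈ Icc a 1)
    (F U : ℝ → ℝ → ℝ) (hFmap : MapsI F)
    (hFmono : MonoI F) (hUmono : MonoI U)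
    (hdist : ∀ x ∈ Icc a 1, F x (U q t) = U (F x q) (F x t))
    (hstrict : StrictMonoOn (fun x => F x (U q t)) (Icc a 1))
    (p s y' : ℝ) (hp : p ∈ Icc a 1) (hs : s ∈ Icc a 1) (hy' : y' ∈ Icc a 1)
    (heq : U (F y' q) (F y' t) = U (F p q) (F s t)) :
    (min p s ≤ y' ∧ y' ≤ max p s) ∧
      ∀ f g h : ℝ → ℝ, IsFTV f → ConvexFTV f → IsFTV g → IsFTV h →
        min (f p) (min (g q) (min (f s) (h t))) ≤ min (f y') (min (g q) (h t)) ∧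
        min (f p) (f s) ≤ f y' := by
  have hsub : Icc a 1 ⊆ Icc (0:ℝ) 1 := fun x hx => ⟨ha.1.trans hx.1, hx.2⟩
  have hm : min p s ∈ Icc a 1 := ⟨le_min hp.1 hs.1, (min_le_left _ _).trans hp.2⟩
  have hM : max p s ∈ Icc a 1 := ⟨hp.1.trans (le_max_left _ _), max_le hp.2 hs.2⟩
  have hsqueeze : F y' (U q t) ∈ Icc (F (min p s) (U q t)) (F (max p s) (U q t)) := by
    rw [hdist _ hy', hdist _ hm, hdist _ hM, heq]
    exact ⟨monoI_comp_le hFmap hFmono hUmono (hsub hq) (hsub ht) (hsub hm) (hsub hp) (hsub hm)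
        (hsub hs) (min_le_left _ _) (min_le_right _ _),
      monoI_comp_le hFmap hFmono hUmono (hsub hq) (hsub ht) (hsub hp) (hsub hM) (hsub hs)
        (hsub hM) (le_max_left _ _) (le_max_right _ _)⟩
  have hbetween : y' ∈ uIcc p s := hstrict.mem_Icc_of_map_mem_Icc hm hy' hM hsqueeze
  refine ⟨hbetween, fun f g h _ hf _ _ => ?_⟩
  have hfy : min (f p) (f s) ≤ f y' := hf.min_le_of_mem_uIcc (hsub hp) (hsub hs) hbetween
  refine ⟨?_, hfy⟩
  calc min (f p) (min (g q) (min (f s) (h t))) = min (min (f p) (f s)) (min (g q) (h t)) := by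
        ac_rfl
    _ ≤ min (f y') (min (g q) (h t)) := min_le_min_right _ hfy

/-- Key lemma **A**: if `U(F(y',q), F(y',t)) = U(F(p,q), F(s,t))` and `x ↦ F(x, U(q,t))`
is strictly increasing on `[a,1]` while `F(x,U(q,t)) = U(F(x,q),F(x,t))` there, then
`y'` lies between `p` and `s`; consequently, for a convex fuzzy truth value `f`,
`f(p) ∧ g(q) ∧ f(s) ∧ h(t) ≤ f(y') ∧ g(q) ∧ h(t)` (in particular
`min (f p) (f s) ≤ f y'`). -/
theorem between_of_strictMono_distrib (a : ℝ) (ha : a ∈ Ico (0:ℝ) 1)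
    (q t : ℝ) (hq : q ∈ Icc a 1) (ht : t ∈ Icc a 1)
    (F U : ℝ → ℝ → ℝ) (hFmap : MapsI F) (hUmap : MapsI U)
    (hFmono : MonoI F) (hUmono : MonoI U)
    (hdist : ∀ x ∈ Icc a 1, F x (U q t) = U (F x q) (F x t))
    (hstrict : StrictMonoOn (fun x => F x (U q t)) (Icc a 1))
    (p s y' : ℝ) (hp : p ∈ Icc a 1) (hs : s ∈ Icc a 1) (hy' : y' ∈ Icc a 1)
    (heq : U (F y' q) (F y' t) = U (F p q) (F s t)) :
    (min p s ≤ y' ∧ y' ≤ max p s) ∧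
      ∀ f g h : ℝ → ℝ, IsFTV f → ConvexFTV f → IsFTV g → IsFTV h →
        min (f p) (min (g q) (min (f s) (h t))) ≤ min (f y') (min (g q) (h t)) ∧
        min (f p) (f s) ≤ f y' :=
  between_of_strictMono_distrib_general a ha q t hq ht F U hFmap hFmono hUmono hdist hstrict p s y'
    hp hs hy' heq
end
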